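/- Let D ≥ 1 and let U be a D×D real upper triangular matrix (U i j = 0 whenever i > j). Let W denote the vector space of D×D real upper triangular matrices, and define the linear endomorphism S_U of W by S_U(X) = triu(X Uᵀ + U Xᵀ), where triu(A) is the matrix whose (i,j) entry equals A i j when i ≤ j and 0 when i > j. Then the determinant of S_U equals 2^D · ∏_{i=1}^{D} (U i i)^{i}. -/

import Mathlib

open Matrix

/-- The subspace of `D × D` real upper triangular matrices. -/
def upperTriangularSubmodule (D : ℕ) : Submodule ℝ (Matrix (Fin D) (Fin D) ℝ) where
  carrier := {X | ∀ i j : Fin D, j < i → X i j = 0}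
  add_mem' := by
    intro X Y hX hY i j hij
    simp [Matrix.add_apply, hX i j hij, hY i j hij]
  zero_mem' := by intro i j _; rfl
  smul_mem' := by
    intro c X hX i j hij
    simp [Matrix.smul_apply, hX i j hij]

/-- `triu` : keep the upper triangular part of a matrix, as a linear map. -/
def triuLinearMap (D : ℕ) :
    Matrix (Fin D) (Fin D) ℝ →ₗ[ℝ] Matrix (Fin D) (Fin D) ℝ where
  toFun A := Matrix.of fun i j => if i ≤ j then A i j else 0
  map_add' A B := by
    ext i j
    simp only [Matrix.of_apply, Matrix.add_apply]
    split <;> simp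
  map_smul' c A := by
    ext i j
    simp only [Matrix.of_apply, Matrix.smul_apply, RingHom.id_apply]
    split <;> simp

/-- The endomorphism `X ↦ triu (X Uᵀ + U Xᵀ)` of the space of upper triangular
matrices: the Fréchet derivative of the reversed Cholesky parametrization `U ↦ U Uᵀ`. -/
noncomputable def revCholeskyJacobianMap (D : ℕ) (U : Matrix (Fin D) (Fin D) ℝ) :
    upperTriangularSubmodule D →ₗ[ℝ] upperTriangularSubmodule D :=
  LinearMap.codRestrict (upperTriangularSubmodule D)
    ((triuLinearMap D).comp
      ((LinearMap.mulRight ℝ Uᵀ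
          + (LinearMap.mulLeft ℝ U).comp
              (Matrix.transposeLinearEquiv (Fin D) (Fin D) ℝ ℝ).toLinearMap).comp
        (upperTriangularSubmodule D).subtype))
    (by
      intro X i j hij
      simp only [LinearMap.comp_apply, triuLinearMap, LinearMap.coe_mk, AddHom.coe_mk,
        Matrix.of_apply]
      exact if_neg (not_le.mpr hij))

/-!
Order the basis `E_{ij}` (`i ≤ j`) of the upper triangular matrices column by column, and by row
within a column. The coordinate of `triu (E_{ij} Uᵀ + U E_{ij}ᵀ)` at `E_{kl}` is
`[i = k] U l j + [i = l] U k j`, which vanishes below the diagonal in this order because `U` is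
upper triangular. The diagonal entry at `E_{ij}` is `U j j`, doubled when `i = j`; column `j`
contributes `j + 1` of them.
-/

theorem Matrix.det_of_blockTriangular_of_injective {m α R : Type*} [Fintype m] [DecidableEq m]
    [CommRing R] [LinearOrder α] {M : Matrix m m R} {b : m → α} (hM : M.BlockTriangular b)
    (hb : Function.Injective b) : M.det = ∏ i, M i i :=
  letI : LinearOrder m := LinearOrder.lift' b hb
  det_of_isUpperTriangular hM

theorem Finset.prod_subtype_le_eq_prod_prod_Iic {ι M : Type*} [Fintype ι] [LinearOrder ι]
    [LocallyFiniteOrderBot ι] [CommMonoid M] (f : ι → ι → M) :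
    ∏ p : {p : ι × ι // p.1 ≤ p.2}, f p.1.1 p.1.2 = ∏ j, ∏ i ∈ Iic j, f i j := by
  rw [← Finset.prod_subtype (univ.filter fun p : ι × ι => p.1 ≤ p.2) (by simp)
    (fun p => f p.1 p.2), Finset.prod_filter, Fintype.prod_prod_type, Finset.prod_comm]
  simp_rw [← Finset.prod_filter, Finset.filter_ge_eq_Iic]

abbrev UpperTriangularIndex (D : ℕ) := {p : Fin D × Fin D // p.1 ≤ p.2}

noncomputable def upperTriangularEquivFun (D : ℕ) :
    upperTriangularSubmodule D ≃ₗ[ℝ] (UpperTriangularIndex D → ℝ) where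
  toFun X p := X.1 p.1.1 p.1.2
  map_add' _ _ := rfl
  map_smul' _ _ := rfl
  invFun f := ⟨of fun i j => if h : i ≤ j then f ⟨(i, j), h⟩ else 0,
    fun _ _ hij => dif_neg hij.not_ge⟩
  left_inv X := by
    ext i j
    by_cases h : i ≤ j
    · simp [h]
    · simp [h, X.2 i j (not_le.mp h)]
  right_inv f := funext fun p => by simp [p.2]

noncomputable def upperTriangularBasis (D : ℕ) :
    Module.Basis (UpperTriangularIndex D) ℝ (upperTriangularSubmodule D) :=
  .ofEquivFun (upperTriangularEquivFun D)

theorem upperTriangularBasis_repr_apply (D : ℕ) (X : upperTriangularSubmodule D)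
    (p : UpperTriangularIndex D) :
    (upperTriangularBasis D).repr X p = (X : Matrix (Fin D) (Fin D) ℝ) p.1.1 p.1.2 :=
  rfl

theorem coe_upperTriangularBasis (D : ℕ) (p : UpperTriangularIndex D) :
    (upperTriangularBasis D p : Matrix (Fin D) (Fin D) ℝ) = single p.1.1 p.1.2 1 := by
  classical
  ext i j
  rw [upperTriangularBasis, Module.Basis.coe_ofEquivFun]
  by_cases h : i ≤ j
  · simp [upperTriangularEquivFun, h, Pi.single_apply, single_apply, Subtype.ext_iff,
      Prod.ext_iff, eq_comm]
  · have : ¬(p.1.1 = i ∧ p.1.2 = j) := fun ⟨hi, hj⟩ => h (hi ▸ hj ▸ p.2)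
    simp [upperTriangularEquivFun, h, single_apply_of_ne _ _ _ _ _ this]

theorem revCholeskyJacobianMap_apply_apply (D : ℕ) (U : Matrix (Fin D) (Fin D) ℝ)
    (X : upperTriangularSubmodule D) {i j : Fin D} (hij : i ≤ j) :
    (revCholeskyJacobianMap D U X : Matrix (Fin D) (Fin D) ℝ) i j
      = (X.1 * Uᵀ + U * X.1ᵀ) i j :=
  if_pos hij

theorem toMatrix_revCholeskyJacobianMap_apply (D : ℕ) (U : Matrix (Fin D) (Fin D) ℝ)
    (q p : UpperTriangularIndex D) :
    LinearMap.toMatrix (upperTriangularBasis D) (upperTriangularBasis D)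
        (revCholeskyJacobianMap D U) q p
      = (if p.1.1 = q.1.1 then U q.1.2 p.1.2 else 0)
        + (if p.1.1 = q.1.2 then U q.1.1 p.1.2 else 0) := by
  rw [LinearMap.toMatrix_apply, upperTriangularBasis_repr_apply,
    revCholeskyJacobianMap_apply_apply _ _ _ q.2, coe_upperTriangularBasis, transpose_single]
  simp [mul_apply, single_apply, ite_and]

theorem toMatrix_revCholeskyJacobianMap_blockTriangular (D : ℕ) {U : Matrix (Fin D) (Fin D) ℝ}
    (hU : ∀ i j : Fin D, j < i → U i j = 0) :
    (LinearMap.toMatrix (upperTriangularBasis D) (upperTriangularBasis D)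
      (revCholeskyJacobianMap D U)).BlockTriangular
        fun p : UpperTriangularIndex D => toLex (p.1.2, p.1.1) := by
  rintro ⟨⟨q₁, q₂⟩, hq⟩ ⟨⟨p₁, p₂⟩, hp⟩ (hlt : toLex (p₂, p₁) < toLex (q₂, q₁))
  rw [toMatrix_revCholeskyJacobianMap_apply]
  rcases Prod.Lex.toLex_lt_toLex.mp hlt with hcol | ⟨rfl, hrow⟩
  · simp [hU q₂ p₂ hcol, (hp.trans_lt hcol).ne]
  · simp [hrow.ne, (hrow.trans_le hq).ne]

theorem toMatrix_revCholeskyJacobianMap_apply_self (D : ℕ) (U : Matrix (Fin D) (Fin D) ℝ)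
    (p : UpperTriangularIndex D) :
    LinearMap.toMatrix (upperTriangularBasis D) (upperTriangularBasis D)
        (revCholeskyJacobianMap D U) p p
      = (if p.1.1 = p.1.2 then 2 else 1) * U p.1.2 p.1.2 := by
  rw [toMatrix_revCholeskyJacobianMap_apply, if_pos rfl]
  split_ifs with h
  · rw [h]; ring
  · ring

theorem det_revCholeskyJacobianMap_general (D : ℕ) (U : Matrix (Fin D) (Fin D) ℝ)
    (hU : ∀ i j : Fin D, j < i → U i j = 0) :
    LinearMap.det (revCholeskyJacobianMap D U)
      = 2 ^ D * ∏ i : Fin D, U i i ^ ((i : ℕ) + 1) := by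
  classical
  have hkey : Function.Injective fun p : UpperTriangularIndex D => toLex (p.1.2, p.1.1) :=
    fun p q h => Subtype.ext (Prod.ext (congrArg Prod.snd h) (congrArg Prod.fst h))
  have hcolumn (j : Fin D) :
      ∏ i ∈ Finset.Iic j, (if i = j then (2 : ℝ) else 1) * U j j = 2 * U j j ^ ((j : ℕ) + 1) := by
    rw [Finset.prod_mul_distrib, Finset.prod_ite_eq' _ j, if_pos (Finset.mem_Iic.2 le_rfl),
      Finset.prod_const, Fin.card_Iic]
  rw [← LinearMap.det_toMatrix (upperTriangularBasis D),
    det_of_blockTriangular_of_injective (toMatrix_revCholeskyJacobianMap_blockTriangular D hU) hkey]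
  simp_rw [toMatrix_revCholeskyJacobianMap_apply_self]
  rw [Finset.prod_subtype_le_eq_prod_prod_Iic (fun i j => (if i = j then (2 : ℝ) else 1) * U j j)]
  simp_rw [hcolumn]
  rw [Finset.prod_mul_distrib, Finset.prod_const, Finset.card_univ, Fintype.card_fin]

/-- The determinant of `X ↦ triu (X Uᵀ + U Xᵀ)` on upper triangular matrices equals
`2^D ∏_{i=1}^D (U i i)^{i}` (Jacobian of `U ↦ U Uᵀ`, Lemma A.1). -/
theorem det_revCholeskyJacobianMap (D : ℕ) (hD : 1 ≤ D) (U : Matrix (Fin D) (Fin D) ℝ)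
    (hU : ∀ i j : Fin D, j < i → U i j = 0) :
    LinearMap.det (revCholeskyJacobianMap D U)
      = 2 ^ D * ∏ i : Fin D, U i i ^ ((i : ℕ) + 1) :=
  det_revCholeskyJacobianMap_general D U hU
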